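/- arXiv:2411.02705 — 2 statements merged into one kernel-verified Lean document; each statement's English description precedes it below -/
import Mathlib

section
/- Let a ≥ 3 and b ≥ 0 be integers with both a and b odd. Then there is no (a,b)-regular weighted graph of girth 3 on a+b+1 vertices, but there exists one on a+b+2 vertices. Hence the minimum order n(a,b,3) equals a+b+2. -/
open Classical in
/-- Weight of a walk in `L ⊔ H`: light edges (in `L`) weigh 1, heavy edges weigh 2. -/
noncomputable def wWeight {V : Type*} (L H : SimpleGraph V) {u : V}
    (w : (L ⊔ H).Walk u u) : ℕ :=
  (w.edges.map fun e => if e ∈ L.edgeSet then 1 else 2).sum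

/-- `(L,H)` is an `(a,b)`-regular weighted graph of girth `g`. -/
def IsWGraph {V : Type*} (L H : SimpleGraph V) (a b g : ℕ) : Prop :=
  Disjoint L H ∧
  (∀ v, (L.neighborSet v).ncard = a) ∧
  (∀ v, (H.neighborSet v).ncard = b) ∧
  (∃ (u : V) (w : (L ⊔ H).Walk u u), w.IsCycle ∧ wWeight L H w = g) ∧
  (∀ (u : V) (w : (L ⊔ H).Walk u u), w.IsCycle → g ≤ wWeight L H w)

/-!
Every cycle weighs at least its length, so a weighted graph has girth 3 exactly when `L` contains
a triangle.

Lower bound: `L` is `a`-regular with `a` odd, so the order `n` is even, and `L ⊔ H` is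
`(a + b)`-regular, so `a + b < n`. As `a + b + 1` is odd, `n ≥ a + b + 2`.

Construction on `n = a + b + 2` vertices: it suffices to find an `a`-regular `L` containing a
triangle and a perfect matching `M` disjoint from `L`, for then `H = (L ⊔ M)ᶜ` is `b`-regular.
For `b = 1` take for `L` the complement of the cycle `Cₙ`, and for `H` every other edge of `Cₙ`.
For `b ≥ 3` let `L` consist of the chords of `Cₙ` of cyclic length in `[(b + 3)/2, n/2)`
together with the matching `{0, 2}, {1, 3}, {4, 5}, {6, 7}, …`; the twisted pair `{0, 2}` closes
the triangle `0, 2, n/2 + 1`, and `M = {n - 1, 0}, {1, 2}, {3, 4}, …` avoids `L`.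
-/

open SimpleGraph

namespace SimpleGraph

variable {V : Type*}

theorem ncard_neighborSet_eq_degree [Fintype V] (G : SimpleGraph V) [DecidableRel G.Adj]
    (v : V) : (G.neighborSet v).ncard = G.degree v := by
  rw [Set.ncard_eq_toFinset_card', Set.toFinset_card, card_neighborSet_eq_degree]

theorem ncard_neighborSet_sup_of_disjoint [Finite V] {G G' : SimpleGraph V}
    (h : Disjoint G G') (v : V) :
    ((G ⊔ G').neighborSet v).ncard = (G.neighborSet v).ncard + (G'.neighborSet v).ncard := by
  rw [neighborSet_sup]
  refine Set.ncard_union_eq (Set.disjoint_left.mpr fun w hG hG' => ?_)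
  exact (disjoint_iff.mp h ▸ (⟨hG, hG'⟩ : (G ⊓ G').Adj v w) : (⊥ : SimpleGraph V).Adj v w)

theorem ncard_neighborSet_lt [Finite V] (G : SimpleGraph V) (v : V) :
    (G.neighborSet v).ncard < Nat.card V := by
  rw [← Set.ncard_univ]
  refine Set.ncard_lt_ncard (Set.ssubset_univ_iff.mpr fun h => ?_)
  exact G.irrefl (h.symm ▸ Set.mem_univ v : v ∈ G.neighborSet v)

theorem ncard_neighborSet_compl [Fintype V] (G : SimpleGraph V) (v : V) :
    (Gᶜ.neighborSet v).ncard = Fintype.card V - 1 - (G.neighborSet v).ncard := by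
  classical
  rw [ncard_neighborSet_eq_degree, ncard_neighborSet_eq_degree, degree_compl]

def pairingGraph (f : V → V) : SimpleGraph V := fromRel fun x y => y = f x

variable {f g : V → V}

theorem pairingGraph_adj (hf : f.Involutive) {x y : V} :
    (pairingGraph f).Adj x y ↔ x ≠ y ∧ y = f x := by
  simp only [pairingGraph, fromRel_adj, and_congr_right_iff]
  rintro -
  exact or_iff_left_of_imp fun h => h ▸ (hf y).symm

theorem neighborSet_pairingGraph (hf : f.Involutive) (hne : ∀ x, f x ≠ x) (x : V) :
    (pairingGraph f).neighborSet x = {f x} := by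
  ext y
  simp only [mem_neighborSet, pairingGraph_adj hf, Set.mem_singleton_iff]
  exact and_iff_right_of_imp fun h => h ▸ (hne x).symm

theorem ncard_neighborSet_pairingGraph (hf : f.Involutive) (hne : ∀ x, f x ≠ x) (x : V) :
    ((pairingGraph f).neighborSet x).ncard = 1 := by
  rw [neighborSet_pairingGraph hf hne, Set.ncard_singleton]

theorem disjoint_pairingGraph (hf : f.Involutive) (hg : g.Involutive) (h : ∀ x, f x ≠ g x) :
    Disjoint (pairingGraph f) (pairingGraph g) := by
  rw [disjoint_iff_inf_le]
  rintro x y ⟨hxy, hxy'⟩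
  rw [pairingGraph_adj hf] at hxy
  rw [pairingGraph_adj hg] at hxy'
  exact h x (hxy.2 ▸ hxy'.2)

variable [AddGroup V] {s : Set V}

theorem circulantGraph_adj_iff_of_neg_eq (hs : -s = s) {u v : V} :
    (circulantGraph s).Adj u v ↔ u ≠ v ∧ v - u ∈ s := by
  rw [circulantGraph_adj, ← neg_sub, ← Set.mem_neg, hs, or_self]

theorem neighborSet_circulantGraph (hs : -s = s) (h0 : (0 : V) ∉ s) (v : V) :
    (circulantGraph s).neighborSet v = (· + v) '' s := by
  ext w
  simp only [mem_neighborSet, circulantGraph_adj_iff_of_neg_eq hs, Set.mem_image]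
  constructor
  · rintro ⟨-, h⟩
    exact ⟨w - v, h, sub_add_cancel w v⟩
  · rintro ⟨d, hd, rfl⟩
    refine ⟨fun h => h0 ?_, by simpa using hd⟩
    rwa [← add_eq_right.mp h.symm]

theorem ncard_neighborSet_circulantGraph (hs : -s = s) (h0 : (0 : V) ∉ s) (v : V) :
    ((circulantGraph s).neighborSet v).ncard = s.ncard := by
  rw [neighborSet_circulantGraph hs h0, Set.ncard_image_of_injective _ (add_left_injective v)]

theorem disjoint_pairingGraph_circulantGraph (hs : -s = s) (hf : f.Involutive)
    (h : ∀ x, f x - x ∉ s) : Disjoint (pairingGraph f) (circulantGraph s) := by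
  rw [disjoint_iff_inf_le]
  rintro x y ⟨hxy, hxy'⟩
  rw [pairingGraph_adj hf] at hxy
  rw [circulantGraph_adj_iff_of_neg_eq hs] at hxy'
  exact h x (hxy.2 ▸ hxy'.2)

end SimpleGraph

section WeightedGraph

variable {V : Type*} {L H : SimpleGraph V} {a b g : ℕ}

theorem three_le_wWeight {u : V} {w : (L ⊔ H).Walk u u} (hw : w.IsCycle) :
    3 ≤ wWeight L H w := by
  classical
  calc 3 ≤ w.length := hw.three_le_length
    _ = (w.edges.map fun _ => 1).sum := by simp
    _ ≤ wWeight L H w := List.sum_le_sum fun e _ => by split <;> omega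

theorem isWGraph_three_of_adj (hLH : Disjoint L H)
    (hL : ∀ v, (L.neighborSet v).ncard = a) (hH : ∀ v, (H.neighborSet v).ncard = b)
    {x y z : V} (hxy : L.Adj x y) (hyz : L.Adj y z) (hzx : L.Adj z x) :
    IsWGraph L H a b 3 := by
  classical
  refine ⟨hLH, hL, hH, ⟨x, .cons (Or.inl hxy) (.cons (Or.inl hyz) (.cons (Or.inl hzx) .nil)),
    ?_, ?_⟩, fun _ _ hw => three_le_wWeight hw⟩
  · simp [Walk.cons_isCycle_iff, Walk.edges, hxy.ne, hxy.ne', hyz.ne, hzx.ne, hzx.ne']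
  · simp [wWeight, hxy, hyz, hzx]

theorem isWGraph_compl_sup_of_adj [Fintype V] {M : SimpleGraph V}
    (hcard : Fintype.card V = a + b + 2) (hLM : Disjoint L M)
    (hL : ∀ v, (L.neighborSet v).ncard = a) (hM : ∀ v, (M.neighborSet v).ncard = 1)
    {x y z : V} (hxy : L.Adj x y) (hyz : L.Adj y z) (hzx : L.Adj z x) :
    IsWGraph L (L ⊔ M)ᶜ a b 3 := by
  refine isWGraph_three_of_adj (disjoint_compl_right.mono_left le_sup_left) hL (fun v => ?_)
    hxy hyz hzx
  rw [ncard_neighborSet_compl, ncard_neighborSet_sup_of_disjoint hLM, hL, hM, hcard]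
  omega

namespace IsWGraph

theorem even_card [Fintype V] (h : IsWGraph L H a b g) (ha : Odd a) :
    Even (Fintype.card V) := by
  classical
  have hdeg : ∀ v, Odd (L.degree v) := fun v => by
    rwa [← ncard_neighborSet_eq_degree, h.2.1 v]
  simpa [hdeg] using L.even_card_odd_degree_vertices

theorem add_lt_card [Finite V] (h : IsWGraph L H a b g) : a + b < Nat.card V := by
  obtain ⟨hLH, hL, hH, ⟨u, -⟩, -⟩ := h
  have := (L ⊔ H).ncard_neighborSet_lt u
  rwa [ncard_neighborSet_sup_of_disjoint hLH, hL, hH] at this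

theorem add_add_two_le_card [Fintype V] (h : IsWGraph L H a b g) (ha : Odd a) (hb : Odd b) :
    a + b + 2 ≤ Fintype.card V := by
  have hlt := h.add_lt_card
  rw [Nat.card_eq_fintype_card] at hlt
  obtain ⟨c, hc⟩ := h.even_card ha
  rw [Nat.odd_iff] at ha hb
  omega

end IsWGraph

end WeightedGraph

namespace Fin

variable {n : ℕ} [NeZero n]

omit [NeZero n] in
theorem val_sub_eq_ite (a b : Fin n) :
    (a - b).val = if b.val ≤ a.val then a.val - b.val else n + a.val - b.val := by
  split_ifs with h
  · exact sub_val_of_le h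
  · exact coe_sub_iff_lt.mpr (not_le.mp h)

def parityPartner (x : Fin n) : Fin n := if Even x.val then x + 1 else x - 1

def shiftedParityPartner (x : Fin n) : Fin n := if Even x.val then x - 1 else x + 1

def twistedParityPartner (x : Fin n) : Fin n :=
  if x.val < 2 then x + 2 else if x.val < 4 then x - 2 else parityPartner x

variable (hn : Even n)
include hn

theorem val_parityPartner (x : Fin n) :
    (parityPartner x).val = if x.val % 2 = 0 then x.val + 1 else x.val - 1 := by
  obtain ⟨m, rfl⟩ := hn
  have : 0 < m := by have := NeZero.ne (m + m); omega
  rw [parityPartner, apply_ite Fin.val, val_add_eq_ite, val_sub_eq_ite, val_one',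
    Nat.mod_eq_of_lt (by omega : 1 < m + m)]
  simp only [Nat.even_iff]
  split_ifs <;> omega

theorem val_shiftedParityPartner (x : Fin n) :
    (shiftedParityPartner x).val = if x.val % 2 = 0 then (if x.val = 0 then n - 1 else x.val - 1)
      else (if x.val + 1 = n then 0 else x.val + 1) := by
  obtain ⟨m, rfl⟩ := hn
  have : 0 < m := by have := NeZero.ne (m + m); omega
  rw [shiftedParityPartner, apply_ite Fin.val, val_add_eq_ite, val_sub_eq_ite, val_one',
    Nat.mod_eq_of_lt (by omega : 1 < m + m)]
  simp only [Nat.even_iff]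
  split_ifs <;> omega

theorem val_twistedParityPartner (h4 : 4 ≤ n) (x : Fin n) :
    (twistedParityPartner x).val = if x.val < 2 then x.val + 2 else if x.val < 4 then x.val - 2
      else if x.val % 2 = 0 then x.val + 1 else x.val - 1 := by
  rw [twistedParityPartner, apply_ite Fin.val, apply_ite Fin.val, val_parityPartner hn,
    val_add_eq_ite, val_sub_eq_ite, coe_ofNat_eq_mod, Nat.mod_eq_of_lt (by omega : 2 < n)]
  split_ifs <;> omega

theorem parityPartner_involutive : (parityPartner : Fin n → Fin n).Involutive := by
  intro x
  ext
  rw [val_parityPartner hn, val_parityPartner hn]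
  split_ifs <;> omega

theorem parityPartner_ne_self (x : Fin n) : parityPartner x ≠ x := by
  rw [ne_eq, Fin.ext_iff, val_parityPartner hn]
  split_ifs <;> omega

theorem shiftedParityPartner_involutive : (shiftedParityPartner : Fin n → Fin n).Involutive := by
  intro x
  ext
  have := x.isLt
  rw [val_shiftedParityPartner hn, val_shiftedParityPartner hn]
  obtain ⟨m, rfl⟩ := hn
  grind

theorem shiftedParityPartner_ne_self (x : Fin n) : shiftedParityPartner x ≠ x := by
  have := x.isLt
  rw [ne_eq, Fin.ext_iff, val_shiftedParityPartner hn]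
  obtain ⟨m, rfl⟩ := hn
  split_ifs <;> omega

variable (h4 : 4 ≤ n)
include h4

theorem twistedParityPartner_involutive : (twistedParityPartner : Fin n → Fin n).Involutive := by
  intro x
  ext
  rw [val_twistedParityPartner hn h4, val_twistedParityPartner hn h4]
  split_ifs <;> omega

theorem twistedParityPartner_ne_self (x : Fin n) : twistedParityPartner x ≠ x := by
  rw [ne_eq, Fin.ext_iff, val_twistedParityPartner hn h4]
  split_ifs <;> omega

theorem twistedParityPartner_ne_shiftedParityPartner (x : Fin n) :
    twistedParityPartner x ≠ shiftedParityPartner x := by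
  have := x.isLt
  rw [ne_eq, Fin.ext_iff, val_twistedParityPartner hn h4, val_shiftedParityPartner hn]
  obtain ⟨m, rfl⟩ := hn
  split_ifs <;> omega

end Fin

def longJumps (n r : ℕ) : Set (Fin n) := {d | r ≤ d.val ∧ d.val + r ≤ n ∧ 2 * d.val ≠ n}

section LongJumps

variable {n r : ℕ} [NeZero n]

theorem neg_longJumps (hr : 1 ≤ r) : -longJumps n r = longJumps n r := by
  ext d
  simp only [Set.mem_neg, longJumps, Set.mem_ofPred_eq, Fin.val_neg, Fin.ext_iff, Fin.val_zero]
  have := d.isLt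
  split_ifs <;> omega

theorem zero_notMem_longJumps (hr : 1 ≤ r) : (0 : Fin n) ∉ longJumps n r := by
  simp only [longJumps, Set.mem_ofPred_eq, Fin.val_zero]
  omega

variable (hn : Even n)
include hn

omit [NeZero n] in
theorem ncard_longJumps (hr : 1 ≤ r) (h : 2 * r ≤ n) : (longJumps n r).ncard = n - 2 * r := by
  obtain ⟨m, rfl⟩ := hn
  have hval : longJumps (m + m) r = Fin.val ⁻¹' ↑((Finset.Icc r (m + m - r)).erase m) := by
    ext d
    simp only [longJumps, Set.mem_ofPred_eq, Set.mem_preimage, Finset.coe_erase, Finset.coe_Icc,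
      Set.mem_sdiff, Set.mem_Icc, Set.mem_singleton_iff]
    omega
  rw [hval, Set.ncard_preimage_of_injective_subset_range Fin.val_injective, Set.ncard_coe_finset,
    Finset.card_erase_of_mem (by simp; omega), Nat.card_Icc]
  · omega
  · intro v hv
    simp only [Finset.coe_erase, Finset.coe_Icc, Set.mem_sdiff, Set.mem_Icc] at hv
    rw [Fin.range_val]
    exact Set.mem_Iio.mpr (by omega)

theorem twistedParityPartner_sub_notMem_longJumps (h4 : 4 ≤ n) (hr : 3 ≤ r) (x : Fin n) :
    Fin.twistedParityPartner x - x ∉ longJumps n r := by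
  have := x.isLt
  simp only [longJumps, Set.mem_ofPred_eq, Fin.val_sub_eq_ite, Fin.val_twistedParityPartner hn h4]
  grind

theorem shiftedParityPartner_sub_notMem_longJumps (hr : 2 ≤ r) (x : Fin n) :
    Fin.shiftedParityPartner x - x ∉ longJumps n r := by
  have := x.isLt
  simp only [longJumps, Set.mem_ofPred_eq, Fin.val_sub_eq_ite, Fin.val_shiftedParityPartner hn]
  grind

end LongJumps

theorem pairingGraph_parityPartner_le_cycleGraph {n : ℕ} [NeZero n] (hn : Even n) :
    pairingGraph Fin.parityPartner ≤ cycleGraph n := by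
  intro x y hxy
  obtain ⟨-, rfl⟩ := (pairingGraph_adj (Fin.parityPartner_involutive hn)).mp hxy
  rw [cycleGraph_adj', Fin.val_sub_eq_ite, Fin.val_sub_eq_ite, Fin.val_parityPartner hn]
  grind

theorem isWGraph_compl_cycleGraph {n : ℕ} [NeZero n] (hn : Even n) (h6 : 6 ≤ n) :
    IsWGraph (cycleGraph n)ᶜ (pairingGraph Fin.parityPartner) (n - 3) 1 3 := by
  refine isWGraph_three_of_adj
    (disjoint_compl_left_iff.mpr (pairingGraph_parityPartner_le_cycleGraph hn)) (fun v => ?_)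
    (ncard_neighborSet_pairingGraph (Fin.parityPartner_involutive hn)
      (Fin.parityPartner_ne_self hn))
    (x := ⟨0, by omega⟩) (y := ⟨2, by omega⟩) (z := ⟨4, by omega⟩) ?_ ?_ ?_
  · obtain ⟨m, rfl⟩ : ∃ m, n = m + 3 := ⟨n - 3, by omega⟩
    rw [ncard_neighborSet_compl, Fintype.card_fin, ncard_neighborSet_eq_degree,
      cycleGraph_degree_three_le]
    omega
  all_goals
    simp only [compl_adj, cycleGraph_adj', Fin.val_sub_eq_ite, ne_eq, Fin.ext_iff]
    grind

def twistedCirculantGraph (n r : ℕ) [NeZero n] : SimpleGraph (Fin n) :=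
  circulantGraph (longJumps n r) ⊔ pairingGraph Fin.twistedParityPartner

section TwistedCirculantGraph

variable {n r : ℕ} [NeZero n] (hn : Even n) (hr : 3 ≤ r) (hrn : 2 * r + 2 ≤ n)
include hn hr hrn

theorem ncard_neighborSet_twistedCirculantGraph (v : Fin n) :
    ((twistedCirculantGraph n r).neighborSet v).ncard = n - 2 * r + 1 := by
  have hs := neg_longJumps (n := n) (r := r) (by omega)
  have hT := Fin.twistedParityPartner_involutive hn (by omega)
  rw [twistedCirculantGraph, ncard_neighborSet_sup_of_disjoint
      (disjoint_pairingGraph_circulantGraph hs hT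
        (twistedParityPartner_sub_notMem_longJumps hn (by omega) hr)).symm,
    ncard_neighborSet_circulantGraph hs (zero_notMem_longJumps (by omega)),
    ncard_longJumps hn (by omega) (by omega),
    ncard_neighborSet_pairingGraph hT (Fin.twistedParityPartner_ne_self hn (by omega))]

theorem disjoint_twistedCirculantGraph_pairingGraph_shiftedParityPartner :
    Disjoint (twistedCirculantGraph n r) (pairingGraph Fin.shiftedParityPartner) := by
  have hS := Fin.shiftedParityPartner_involutive hn
  refine disjoint_sup_left.mpr ⟨(disjoint_pairingGraph_circulantGraph (neg_longJumps (by omega))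
    hS (shiftedParityPartner_sub_notMem_longJumps hn (by omega))).symm, ?_⟩
  exact disjoint_pairingGraph (Fin.twistedParityPartner_involutive hn (by omega)) hS
    (Fin.twistedParityPartner_ne_shiftedParityPartner hn (by omega))

theorem isWGraph_twistedCirculantGraph :
    IsWGraph (twistedCirculantGraph n r)
      (twistedCirculantGraph n r ⊔ pairingGraph Fin.shiftedParityPartner)ᶜ
      (n - 2 * r + 1) (2 * r - 3) 3 := by
  have hadj : ∀ x y : Fin n, x ≠ y → y - x ∈ longJumps n r →
      (twistedCirculantGraph n r).Adj x y :=
    fun x y hxy h => Or.inl ((circulantGraph_adj_iff_of_neg_eq (neg_longJumps (by omega))).mpr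
      ⟨hxy, h⟩)
  refine isWGraph_compl_sup_of_adj (by rw [Fintype.card_fin]; omega)
    (disjoint_twistedCirculantGraph_pairingGraph_shiftedParityPartner hn hr hrn)
    (ncard_neighborSet_twistedCirculantGraph hn hr hrn)
    (ncard_neighborSet_pairingGraph (Fin.shiftedParityPartner_involutive hn)
      (Fin.shiftedParityPartner_ne_self hn))
    (x := ⟨0, by omega⟩) (y := ⟨2, by omega⟩) (z := ⟨n / 2 + 1, by omega⟩) ?_ ?_ ?_
  · refine Or.inr ((pairingGraph_adj (Fin.twistedParityPartner_involutive hn (by omega))).mpr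
      ⟨by simp [Fin.ext_iff], ?_⟩)
    ext
    rw [Fin.val_twistedParityPartner hn (by omega)]
    simp
  all_goals
    refine hadj _ _ (Fin.ne_of_val_ne (by dsimp only; omega)) ?_
    simp only [longJumps, Set.mem_ofPred_eq, Fin.val_sub_eq_ite]
    grind

end TwistedCirculantGraph

theorem exists_isWGraph_three {a b : ℕ} (ha : 3 ≤ a) (hao : Odd a) (hbo : Odd b) :
    ∃ L H : SimpleGraph (Fin (a + b + 2)), IsWGraph L H a b 3 := by
  rw [Nat.odd_iff] at hao hbo
  obtain rfl | hb : b = 1 ∨ 3 ≤ b := by omega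
  · have h := isWGraph_compl_cycleGraph (n := a + 3) (Nat.even_iff.mpr (by omega)) (by omega)
    exact ⟨_, _, by rwa [Nat.add_sub_cancel] at h⟩
  · have h := isWGraph_twistedCirculantGraph (n := a + b + 2) (r := (b + 3) / 2)
      (Nat.even_iff.mpr (by omega)) (by omega) (by omega)
    rw [show a + b + 2 - 2 * ((b + 3) / 2) + 1 = a by omega,
      show 2 * ((b + 3) / 2) - 3 = b by omega] at h
    exact ⟨_, _, h⟩

/-- For `a ≥ 3` with `a` and `b` odd, there is no `(a,b)`-regular weighted
graph of girth 3 on `a+b+1` vertices, but there is one on `a+b+2` vertices;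
hence `n(a,b,3) = a+b+2`. -/
theorem stmt_8 (a b : ℕ) (ha : 3 ≤ a) (hao : Odd a) (hbo : Odd b) :
    (¬ ∃ L H : SimpleGraph (Fin (a + b + 1)), IsWGraph L H a b 3) ∧
    (∃ L H : SimpleGraph (Fin (a + b + 2)), IsWGraph L H a b 3) ∧
    IsLeast {n : ℕ | ∃ L H : SimpleGraph (Fin n), IsWGraph L H a b 3}
      (a + b + 2) := by
  have hex := exists_isWGraph_three ha hao hbo
  have hle : ∀ n, (∃ L H : SimpleGraph (Fin n), IsWGraph L H a b 3) → a + b + 2 ≤ n := by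
    rintro n ⟨L, H, h⟩
    simpa using h.add_add_two_le_card hao hbo
  exact ⟨fun h => absurd (hle _ h) (by omega), hex, hex, hle⟩
end

section
/- Let 3 ≤ a ≤ b with a ≡ b mod 2. Then there exists a weighted graph G = (L,H) on a+b+2 vertices with L a-regular, H b-regular, disjoint edge sets, and girth 4 (minimum cycle weight 4, L-edges weighing 1 and H-edges weighing 2). -/
/-!
Work in the dihedral group `D_n` of order `2n = a + b + 2`. The light graph `L` is the Cayley graph
of the `a` reflections `sr 0, …, sr (a-1)`; every edge joins a rotation to a reflection, so `L` is
bipartite. The heavy graph `H` is the Cayley graph of everything except `1`, `sr a` and the light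
generators, so it is `(2n - 2 - a) = b`-regular and edge-disjoint from `L`. A cycle of weight at
most 3 would be a triangle of light edges, which a bipartite graph does not have; the triangle
`1, sr 0, sr 1` has weight `1 + 2 + 1 = 4`. Finally the graphs are transported to `Fin (a + b + 2)`.
-/

open SimpleGraph

section WeightedGraph

variable {V W : Type*} {L H : SimpleGraph V} {u : V}

theorem List.sum_map_ite_one_two {α : Type*} (p : α → Prop) [DecidablePred p] (l : List α) :
    (l.map fun e => if p e then 1 else 2).sum = l.length + l.countP (fun e => ¬ p e) := by
  induction l with
  | nil => rfl
  | cons e l ih => by_cases h : p e <;> simp [h, ih] <;> omega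

open Classical in
theorem wWeight_eq_length_add_countP (w : (L ⊔ H).Walk u u) :
    wWeight L H w = w.length + w.edges.countP (fun e => e ∉ L.edgeSet) := by
  rw [wWeight, List.sum_map_ite_one_two, Walk.length_edges]

theorem length_le_wWeight (w : (L ⊔ H).Walk u u) : w.length ≤ wWeight L H w := by
  rw [wWeight_eq_length_add_countP]
  exact Nat.le_add_right _ _

theorem length_lt_wWeight {w : (L ⊔ H).Walk u u} (h : ∃ e ∈ w.edges, e ∉ L.edgeSet) :
    w.length < wWeight L H w := by
  rw [wWeight_eq_length_add_countP]
  exact Nat.lt_add_of_pos_right (List.countP_pos_iff.2 (by simpa using h))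

theorem four_le_wWeight_of_colorable (hL : L.Colorable 2) {w : (L ⊔ H).Walk u u}
    (hw : w.IsCycle) : 4 ≤ wWeight L H w := by
  have h3 := hw.three_le_length
  by_cases hheavy : ∃ e ∈ w.edges, e ∉ L.edgeSet
  · have := length_lt_wWeight hheavy
    omega
  · have hlight : ∀ e ∈ w.edges, e ∈ L.edgeSet := by simpa using hheavy
    obtain ⟨k, hk⟩ : Even w.length := by
      simpa using two_colorable_iff_forall_loop_even.1 hL u (w.transfer L hlight)
    have := length_le_wWeight w
    omega

theorem exists_isCycle_wWeight_eq_four (hLH : Disjoint L H) {x y z : V}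
    (hxy : L.Adj x y) (hyz : H.Adj y z) (hzx : L.Adj z x) :
    ∃ (u : V) (w : (L ⊔ H).Walk u u), w.IsCycle ∧ wWeight L H w = 4 := by
  have hyz' : ¬ L.Adj y z := fun h => disjoint_left.1 hLH y z h hyz
  refine ⟨x, .cons (Or.inl hxy) (.cons (Or.inr hyz) (.cons (Or.inl hzx) .nil)), ?_, ?_⟩
  · simp [Walk.cons_isCycle_iff, hxy.ne, hyz.ne, hzx.ne, hxy.ne.symm, hzx.ne.symm]
  · simp [wWeight, hxy, hyz', hzx]

open Classical in
theorem wWeight_map {L' H' : SimpleGraph W} (φ : L ⊔ H →g L' ⊔ H')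
    (hφ : ∀ x y, L'.Adj (φ x) (φ y) ↔ L.Adj x y) (w : (L ⊔ H).Walk u u) :
    wWeight L' H' (w.map φ) = wWeight L H w := by
  unfold wWeight
  rw [Walk.edges_map, List.map_map]
  congr 1
  refine List.map_congr_left fun e _ => ?_
  induction e using Sym2.ind with
  | _ x y =>
    simp only [Function.comp_apply, Sym2.map_mk]
    exact if_congr (hφ x y) rfl rfl

theorem IsWGraph.comap {L H : SimpleGraph W} {a b g : ℕ} (σ : V ≃ W) (h : IsWGraph L H a b g) :
    IsWGraph (L.comap σ) (H.comap σ) a b g := by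
  obtain ⟨hLH, hL, hH, ⟨u, w, hw, hwg⟩, hgirth⟩ := h
  have hdeg (G : SimpleGraph W) (v : V) :
      ((G.comap σ).neighborSet v).ncard = (G.neighborSet (σ v)).ncard :=
    Set.ncard_preimage_of_injective_subset_range σ.injective fun x _ => σ.surjective x
  let φ : L.comap σ ⊔ H.comap σ →g L ⊔ H := ⟨σ, id⟩
  let ψ : L ⊔ H →g L.comap σ ⊔ H.comap σ := ⟨σ.symm, by simp⟩
  refine ⟨?_, fun v => (hdeg L v).trans (hL _), fun v => (hdeg H v).trans (hH _),
    ⟨σ.symm u, w.map ψ, hw.map σ.symm.injective,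
      (wWeight_map ψ (by simp [ψ]) w).trans hwg⟩,
    fun v c hc => (hgirth _ _ (hc.map σ.injective)).trans_eq
      (wWeight_map φ (fun _ _ => Iff.rfl) c)⟩
  rw [disjoint_left] at hLH ⊢
  exact fun x y => hLH (σ x) (σ y)

end WeightedGraph

theorem Set.inv_eq_self_of_forall_inv_eq {α : Type*} [InvolutiveInv α] {s : Set α}
    (h : ∀ x ∈ s, x⁻¹ = x) : s⁻¹ = s := by
  ext x
  refine ⟨fun hx => ?_, fun hx => ?_⟩
  · rw [Set.mem_inv] at hx
    rwa [← inv_inv x, h _ hx]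
  · rwa [Set.mem_inv, h x hx]

namespace SimpleGraph

variable {G : Type*} [Group G] {s t : Set G}

theorem mulCayley_adj_of_inv_eq (hs : s⁻¹ = s) {u v : G} :
    (mulCayley s).Adj u v ↔ u ≠ v ∧ u⁻¹ * v ∈ s := by
  have hinv (g : G) : g⁻¹ ∈ s ↔ g ∈ s := by rw [← Set.mem_inv, hs]
  rw [mulCayley_adj, ← hinv (v⁻¹ * u), mul_inv_rev, inv_inv, or_self]

theorem mulCayley_adj_iff_of_inv_eq (hs : s⁻¹ = s) (h1 : 1 ∉ s) {u v : G} :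
    (mulCayley s).Adj u v ↔ u⁻¹ * v ∈ s := by
  rw [mulCayley_adj_of_inv_eq hs, and_iff_right_iff_imp]
  rintro h rfl
  exact h1 (by simpa using h)

theorem ncard_neighborSet_mulCayley (hs : s⁻¹ = s) (h1 : 1 ∉ s) (v : G) :
    ((mulCayley s).neighborSet v).ncard = s.ncard := by
  have : (mulCayley s).neighborSet v = (v * ·) '' s := by
    ext x
    simp [mulCayley_adj_iff_of_inv_eq hs h1]
  rw [this, Set.ncard_image_of_injective _ (mul_right_injective v)]

theorem disjoint_mulCayley (hs : s⁻¹ = s) (hst : Disjoint s t) :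
    Disjoint (mulCayley s) (mulCayley t) := by
  rw [disjoint_left]
  intro u v hsuv htuv
  obtain ⟨-, h | h⟩ := (mulCayley_adj t u v).1 htuv
  · exact Set.disjoint_left.1 hst ((mulCayley_adj_of_inv_eq hs).1 hsuv).2 h
  · exact Set.disjoint_left.1 hst ((mulCayley_adj_of_inv_eq hs).1 hsuv.symm).2 h

theorem colorable_mulCayley {K : Type*} [Group K] [Fintype K] (χ : G →* K)
    (hχ : ∀ g ∈ s, χ g ≠ 1) : (mulCayley s).Colorable (Fintype.card K) :=
  Coloring.colorable ⟨χ, fun {u v} huv heq => by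
    obtain ⟨-, h | h⟩ := (mulCayley_adj s u v).1 huv
    · exact hχ _ h (by simp [heq])
    · exact hχ _ h (by simp [heq])⟩

end SimpleGraph

namespace DihedralGroup

variable {a n : ℕ}

def sign (n : ℕ) : DihedralGroup n →* ℤˣ where
  toFun
    | r _ => 1
    | sr _ => -1
  map_one' := rfl
  map_mul' := by rintro (i | i) (j | j) <;> rfl

def lightGens (a n : ℕ) : Set (DihedralGroup n) :=
  (fun i : ℕ => sr (i : ZMod n)) '' Set.Iio a

def heavyGens (a n : ℕ) : Set (DihedralGroup n) :=
  (insert 1 (insert (sr a) (lightGens a n)))ᶜ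

theorem injOn_sr_natCast :
    Set.InjOn (fun i : ℕ => (sr (i : ZMod n) : DihedralGroup n)) (Set.Iio n) := by
  intro i hi j hj h
  simpa [ZMod.val_cast_of_lt hi, ZMod.val_cast_of_lt hj] using congrArg ZMod.val (sr.inj h)

theorem ncard_lightGens (han : a ≤ n) : (lightGens a n).ncard = a := by
  rw [lightGens, (injOn_sr_natCast.mono (Set.Iio_subset_Iio han)).ncard_image,
    Set.ncard_Iio_nat]

theorem sr_natCast_notMem_lightGens (han : a < n) : sr (a : ZMod n) ∉ lightGens a n := by
  rintro ⟨i, hi, h⟩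
  exact (Set.mem_Iio.1 hi).ne (injOn_sr_natCast ((Set.mem_Iio.1 hi).trans han) han h)

theorem one_notMem_lightGens : (1 : DihedralGroup n) ∉ lightGens a n := by
  rintro ⟨i, -, h⟩
  cases h

theorem r_notMem_lightGens (i : ZMod n) : r i ∉ lightGens a n := by
  rintro ⟨j, -, h⟩
  cases h

theorem sign_ne_one_of_mem_lightGens : ∀ g ∈ lightGens a n, sign n g ≠ 1 := by
  rintro _ ⟨i, -, rfl⟩
  show (-1 : ℤˣ) ≠ 1
  decide

theorem inv_lightGens : (lightGens a n)⁻¹ = lightGens a n :=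
  Set.inv_eq_self_of_forall_inv_eq (by rintro _ ⟨i, -, rfl⟩; exact inv_sr _)

theorem inv_heavyGens : (heavyGens a n)⁻¹ = heavyGens a n := by
  rw [heavyGens, Set.compl_inv, Set.inv_insert, Set.inv_insert, inv_one, inv_sr, inv_lightGens]

theorem ncard_heavyGens [NeZero n] (han : a < n) : (heavyGens a n).ncard + a + 2 = 2 * n := by
  have := Set.ncard_add_ncard_compl (insert 1 (insert (sr (a : ZMod n)) (lightGens a n)))
  rw [Set.ncard_insert_of_notMem, Set.ncard_insert_of_notMem (sr_natCast_notMem_lightGens han),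
    ncard_lightGens han.le, nat_card] at this
  · rw [heavyGens]; omega
  · rintro (h | h)
    · cases h
    · exact one_notMem_lightGens h

theorem isWGraph_mulCayley {b : ℕ} (ha : 2 ≤ a) (hab : a ≤ b) (hn : a + b + 2 = 2 * n) :
    IsWGraph (mulCayley (lightGens a n)) (mulCayley (heavyGens a n)) a b 4 := by
  have han : a < n := by omega
  have : NeZero n := ⟨by omega⟩
  have hL (u v : DihedralGroup n) :=
    mulCayley_adj_iff_of_inv_eq (u := u) (v := v) (inv_lightGens (a := a)) one_notMem_lightGens
  have h1H : (1 : DihedralGroup n) ∉ heavyGens a n := fun h => h (Set.mem_insert _ _)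
  have hLH : Disjoint (mulCayley (lightGens a n)) (mulCayley (heavyGens a n)) :=
    disjoint_mulCayley inv_lightGens <| Set.disjoint_compl_right_iff_subset.2 <|
      (Set.subset_insert _ _).trans (Set.subset_insert _ _)
  refine ⟨hLH, fun v => ?_, fun v => ?_,
    exists_isCycle_wWeight_eq_four hLH (x := 1) (y := sr 0) (z := sr 1) ?_ ?_ ?_,
    fun _ _ hw => four_le_wWeight_of_colorable ?_ hw⟩
  · rw [ncard_neighborSet_mulCayley inv_lightGens one_notMem_lightGens, ncard_lightGens han.le]
  · have := ncard_heavyGens han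
    rw [ncard_neighborSet_mulCayley inv_heavyGens h1H]
    omega
  · rw [hL]
    exact ⟨0, by simp; omega, by simp⟩
  · rw [mulCayley_adj_iff_of_inv_eq inv_heavyGens h1H, inv_sr, sr_mul_sr, sub_zero]
    rintro (h | h | h)
    · rw [one_def, r.injEq, ZMod.one_eq_zero_iff] at h
      omega
    · cases h
    · exact r_notMem_lightGens 1 h
  · rw [hL]
    exact ⟨1, by simp; omega, by simp⟩
  · simpa using colorable_mulCayley (sign n) sign_ne_one_of_mem_lightGens

end DihedralGroup

/-- For `3 ≤ a ≤ b` with `a ≡ b (mod 2)`, there is an `(a,b)`-regular weighted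
graph of girth 4 on `a+b+2` vertices. -/
theorem stmt_12 (a b : ℕ) (ha : 3 ≤ a) (hab : a ≤ b) (hpar : a % 2 = b % 2) :
    ∃ L H : SimpleGraph (Fin (a + b + 2)), IsWGraph L H a b 4 := by
  obtain ⟨n, hn⟩ : ∃ n, a + b + 2 = 2 * n := ⟨(a + b + 2) / 2, by omega⟩
  have : NeZero n := ⟨by omega⟩
  exact ⟨_, _, (DihedralGroup.isWGraph_mulCayley (by omega) hab hn).comap
    (Fintype.equivOfCardEq (by simp [DihedralGroup.card, hn]))⟩
end
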